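/- Let I ⊆ ℝ be an open interval, x₀ ∈ I, let a₂ : I → ℝ be twice continuously differentiable, a₁ : I → ℝ continuously differentiable, and a₀ : I → ℝ continuous. Then there exist an open subinterval J ⊆ I containing x₀, a three-times continuously differentiable function φ : J → ℝ with φ'(x) > 0 for all x ∈ J, and a continuous function g : φ(J) → ℝ, such that: for every three-times differentiable y : J → ℝ satisfying y'''(x) + a₂(x)y''(x) + a₁(x)y'(x) + a₀(x)y(x) = 0 on J, and every three-times differentiable z : φ(J) → ℝ satisfying z(φ(x)) = φ'(x)·exp((1/3)∫_{x₀}^{x} a₂(t) dt)·y(x) for all x ∈ J, one has z'''(t) + g(t)·z(t) = 0 for all t ∈ φ(J). -/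

import Mathlib

/-!
Multiplying `y` by `E = exp (⅓ ∫ a₂)` removes the `y''` term: `w = E y` solves the
semicanonical equation `w''' + p w' + r w = 0` with `p = a₁ - a₂' - a₂² / 3`. Take a positive
local solution `u` of `u'' = -(p / 4) u` and let `φ` be a primitive of `u⁻²`, so that `u² d/dx`
is differentiation with respect to `t = φ x`. Applying it three times to `w / u²`, the relation
`u'' = -(p / 4) u` cancels the `w'` and `w''` terms and leaves `-u⁶ (r - p' / 2) · w / u²`.
Since `φ' E y = w / u²`, the function `z` solves `z''' + g z = 0` with `g ∘ φ = u⁶ (r - p' / 2)`.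
-/

open Set Filter Topology

theorem contDiffOn_succ_of_hasDerivAt {s : Set ℝ} (hs : IsOpen s) {f f' : ℝ → ℝ} {n : ℕ}
    (hf : ∀ x ∈ s, HasDerivAt f (f' x) x) (hf' : ContDiffOn ℝ n f' s) :
    ContDiffOn ℝ (n + 1) f s := by
  rw [contDiffOn_succ_iff_deriv_of_isOpen hs]
  exact ⟨fun x hx => (hf x hx).differentiableAt.differentiableWithinAt, by simp,
    hf'.congr fun x hx => (hf x hx).deriv⟩

theorem hasDerivAt_integral_of_continuousOn {s : Set ℝ} (hs : IsOpen s) (hsc : Convex ℝ s)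
    {f : ℝ → ℝ} (hf : ContinuousOn f s) {a x : ℝ} (ha : a ∈ s) (hx : x ∈ s) :
    HasDerivAt (fun x => ∫ t in a..x, f t) (f x) x :=
  intervalIntegral.integral_hasDerivAt_right
    ((hf.mono (hsc.ordConnected.uIcc_subset ha hx)).intervalIntegrable)
    (hf.stronglyMeasurableAtFilter hs x hx) (hf.continuousAt (hs.mem_nhds hx))

theorem HasStrictDerivAt.exists_continuousOn_leftInverse {𝕜 : Type*} [NontriviallyNormedField 𝕜]
    [CompleteSpace 𝕜] {f : 𝕜 → 𝕜} {f' a : 𝕜} (hf : HasStrictDerivAt f f' a) (hf' : f' ≠ 0) :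
    ∃ U ∈ 𝓝 a, ∃ g : 𝕜 → 𝕜, ContinuousOn g (f '' U) ∧ LeftInvOn g f U := by
  set Φ := (hf.hasStrictFDerivAt_equiv hf').toOpenPartialHomeomorph f
  have hΦ : (Φ : 𝕜 → 𝕜) = f := (hf.hasStrictFDerivAt_equiv hf').toOpenPartialHomeomorph_coe
  refine ⟨Φ.source, Φ.open_source.mem_nhds
    (hf.hasStrictFDerivAt_equiv hf').mem_toOpenPartialHomeomorph_source, Φ.symm,
    Φ.continuousOn_symm.mono ?_, fun x hx => hΦ ▸ Φ.left_inv hx⟩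
  rw [← hΦ, Φ.image_source_eq_target]

theorem iteratedDeriv_succ_comp_eq {J : Set ℝ} (hJ : IsOpen J) {z φ φ' F G : ℝ → ℝ} {k : ℕ}
    (hφ : ∀ x ∈ J, HasDerivAt φ (φ' x) x) (hφ' : ∀ x ∈ J, φ' x ≠ 0)
    (hz : ∀ x ∈ J, DifferentiableAt ℝ (iteratedDeriv k z) (φ x))
    (hzF : ∀ x ∈ J, iteratedDeriv k z (φ x) = F x)
    (hF : ∀ x ∈ J, HasDerivAt F (φ' x * G x) x) :
    ∀ x ∈ J, iteratedDeriv (k + 1) z (φ x) = G x := by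
  intro x hx
  have hcomp : HasDerivAt (iteratedDeriv k z ∘ φ) (iteratedDeriv (k + 1) z (φ x) * φ' x) x := by
    rw [iteratedDeriv_succ]
    exact (hz x hx).hasDerivAt.comp x (hφ x hx)
  have hF' : HasDerivAt (iteratedDeriv k z ∘ φ) (φ' x * G x) x :=
    (hF x hx).congr_of_eventuallyEq (eventually_of_mem (hJ.mem_nhds hx) hzF)
  exact mul_left_cancel₀ (hφ' x hx) ((mul_comm _ _).trans (hcomp.unique hF'))

theorem exists_hasDerivAt_second_order_linear {q : ℝ → ℝ} {x₀ : ℝ} (hq : ContDiffAt ℝ 1 q x₀) :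
    ∃ u v : ℝ → ℝ, u x₀ = 1 ∧
      ∀ᶠ t in 𝓝 x₀, HasDerivAt u (v t) t ∧ HasDerivAt v (q t * u t) t := by
  -- the time is carried along as a third coordinate, making the system autonomous
  have hF : ContDiffAt ℝ 1 (fun p : ℝ × ℝ × ℝ => (p.2.1, q p.2.2 * p.1, (1 : ℝ))) (1, 0, x₀) := by
    have : ContDiffAt ℝ 1 (fun p : ℝ × ℝ × ℝ => q p.2.2) (1, 0, x₀) :=
      hq.comp _ contDiffAt_snd.snd
    fun_prop
  obtain ⟨α, hα₀, ε, hε, hα⟩ :=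
    hF.exists_forall_mem_closedBall_exists_eq_forall_mem_Ioo_hasDerivAt₀ x₀
  set T := Ioo (x₀ - ε) (x₀ + ε)
  have hx₀ : x₀ ∈ T := ⟨by linarith, by linarith⟩
  have hα₁ (t) (ht : t ∈ T) : HasDerivAt (fun s => (α s).1) (α t).2.1 t :=
    (hasFDerivAt_fst (p := α t)).comp_hasDerivAt t (hα t ht)
  have hα₂₃ (t) (ht : t ∈ T) : HasDerivAt (fun s => (α s).2) (q (α t).2.2 * (α t).1, 1) t :=
    (hasFDerivAt_snd (p := α t)).comp_hasDerivAt t (hα t ht)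
  have hα₂ (t) (ht : t ∈ T) : HasDerivAt (fun s => (α s).2.1) (q (α t).2.2 * (α t).1) t :=
    (hasFDerivAt_fst (𝕜 := ℝ) (E := ℝ) (F := ℝ)).comp_hasDerivAt t (hα₂₃ t ht)
  have hα₃ (t) (ht : t ∈ T) : HasDerivAt (fun s => (α s).2.2) 1 t :=
    (hasFDerivAt_snd (𝕜 := ℝ) (E := ℝ) (F := ℝ)).comp_hasDerivAt t (hα₂₃ t ht)
  have htime : EqOn (fun s => (α s).2.2) id T :=
    isOpen_Ioo.eqOn_of_deriv_eq isPreconnected_Ioo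
      (fun t ht => (hα₃ t ht).differentiableAt.differentiableWithinAt) differentiableOn_id
      (fun t ht => by simp [(hα₃ t ht).deriv]) hx₀ (by simp [hα₀])
  refine ⟨fun s => (α s).1, fun s => (α s).2.1, by simp [hα₀], ?_⟩
  filter_upwards [isOpen_Ioo.mem_nhds hx₀] with t ht
  refine ⟨hα₁ t ht, ?_⟩
  simpa [htime ht] using hα₂ t ht

theorem contDiffOn_integral_inv_sq {B : Set ℝ} (hB : IsOpen B) (hBc : Convex ℝ B) {x₀ : ℝ}
    (hx₀ : x₀ ∈ B) {u v q : ℝ → ℝ} (hq : ContinuousOn q B)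
    (hu : ∀ x ∈ B, HasDerivAt u (v x) x) (hv : ∀ x ∈ B, HasDerivAt v (q x * u x) x)
    (hu0 : ∀ x ∈ B, u x ≠ 0) :
    ContDiffOn ℝ 3 (fun x => ∫ t in x₀..x, (u t ^ 2)⁻¹) B := by
  have hv₁ : ContDiffOn ℝ 1 v B := contDiffOn_succ_of_hasDerivAt (n := 0) hB hv
    (contDiffOn_zero.2 (hq.mul fun x hx => (hu x hx).continuousAt.continuousWithinAt))
  have hu₂ : ContDiffOn ℝ 2 u B := contDiffOn_succ_of_hasDerivAt (n := 1) hB hu hv₁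
  have hinv : ContDiffOn ℝ 2 (fun x => (u x ^ 2)⁻¹) B :=
    (hu₂.pow 2).inv fun x hx => pow_ne_zero 2 (hu0 x hx)
  exact contDiffOn_succ_of_hasDerivAt (n := 2) hB
    (fun x hx => hasDerivAt_integral_of_continuousOn hB hBc hinv.continuousOn hx₀ hx) hinv

theorem exists_laguerreForsyth_chart {I : Set ℝ} (hI : IsOpen I) {x₀ : ℝ} (hx₀ : x₀ ∈ I)
    {p : ℝ → ℝ} (hp : ContDiffOn ℝ 1 p I) :
    ∃ ρ > 0, Metric.ball x₀ ρ ⊆ I ∧ ∃ u v φ ψ : ℝ → ℝ,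
      ContDiffOn ℝ 3 φ (Metric.ball x₀ ρ) ∧ ContinuousOn ψ (φ '' Metric.ball x₀ ρ) ∧
      (∀ x ∈ Metric.ball x₀ ρ, 0 < u x) ∧ (∀ x ∈ Metric.ball x₀ ρ, HasDerivAt u (v x) x) ∧
      (∀ x ∈ Metric.ball x₀ ρ, HasDerivAt v (-(p x / 4) * u x) x) ∧
      (∀ x ∈ Metric.ball x₀ ρ, HasDerivAt φ (u x ^ 2)⁻¹ x) ∧
      LeftInvOn ψ φ (Metric.ball x₀ ρ) := by
  obtain ⟨u, v, hu₀, huv⟩ := exists_hasDerivAt_second_order_linear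
    ((hp.div_const 4).neg.contDiffAt (hI.mem_nhds hx₀))
  have hpos : ∀ᶠ x in 𝓝 x₀, 0 < u x :=
    huv.self_of_nhds.1.continuousAt.eventually (lt_mem_nhds (hu₀ ▸ zero_lt_one))
  obtain ⟨ρ, hρ, hB⟩ := Metric.mem_nhds_iff.mp (inter_mem (hI.mem_nhds hx₀) (hpos.and huv))
  set B := Metric.ball x₀ ρ
  have hx₀B : x₀ ∈ B := Metric.mem_ball_self hρ
  have hinv : ContinuousOn (fun x => (u x ^ 2)⁻¹) B := fun x hx =>
    ((hB hx).2.2.1.continuousAt.pow 2).inv₀ (pow_ne_zero 2 (hB hx).2.1.ne') |>.continuousWithinAt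
  set φ := fun x => ∫ t in x₀..x, (u t ^ 2)⁻¹
  have hφ (x) (hx : x ∈ B) : HasDerivAt φ (u x ^ 2)⁻¹ x :=
    hasDerivAt_integral_of_continuousOn Metric.isOpen_ball (convex_ball x₀ ρ) hinv hx₀B hx
  have hφ₃ : ContDiffOn ℝ 3 φ B := contDiffOn_integral_inv_sq Metric.isOpen_ball
    (convex_ball x₀ ρ) hx₀B ((hp.continuousOn.mono fun x hx => (hB hx).1).div_const 4).neg
    (fun x hx => (hB hx).2.2.1) (fun x hx => (hB hx).2.2.2) (fun x hx => (hB hx).2.1.ne')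
  obtain ⟨U, hU, ψ, hψ, hψφ⟩ :=
    ((hφ₃.contDiffAt (Metric.isOpen_ball.mem_nhds hx₀B)).hasStrictDerivAt' (hφ x₀ hx₀B)
      (by norm_num)).exists_continuousOn_leftInverse
      (inv_ne_zero (pow_ne_zero 2 (hB hx₀B).2.1.ne'))
  obtain ⟨ρ', hρ', hJ⟩ :=
    Metric.mem_nhds_iff.mp (inter_mem (Metric.isOpen_ball.mem_nhds hx₀B) hU)
  exact ⟨ρ', hρ', fun x hx => (hB (hJ hx).1).1, u, v, φ, ψ, hφ₃.mono fun x hx => (hJ hx).1,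
    hψ.mono (image_mono fun x hx => (hJ hx).2), fun x hx => (hB (hJ hx).1).2.1,
    fun x hx => (hB (hJ hx).1).2.2.1, fun x hx => (hB (hJ hx).1).2.2.2,
    fun x hx => hφ x (hJ hx).1, fun x hx => hψφ (hJ hx).2⟩

section Semicanonical

variable {a₂ a₂' a₂'' a₁ a₀ E y y₁ y₂ : ℝ → ℝ} {x : ℝ}

theorem hasDerivAt_semicanonical₀ (hE : HasDerivAt E (a₂ x / 3 * E x) x)
    (hy : HasDerivAt y (y₁ x) x) :
    HasDerivAt (fun s => E s * y s) (E x * (y₁ x + a₂ x * y x / 3)) x :=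
  (hE.mul hy).congr_deriv (by ring)

theorem hasDerivAt_semicanonical₁ (hE : HasDerivAt E (a₂ x / 3 * E x) x)
    (ha₂ : HasDerivAt a₂ (a₂' x) x) (hy : HasDerivAt y (y₁ x) x)
    (hy₁ : HasDerivAt y₁ (y₂ x) x) :
    HasDerivAt (fun s => E s * (y₁ s + a₂ s * y s / 3))
      (E x * (y₂ x + 2 * a₂ x * y₁ x / 3 + (a₂' x / 3 + a₂ x ^ 2 / 9) * y x)) x :=
  (hE.mul (hy₁.add ((ha₂.mul hy).div_const 3))).congr_deriv (by
    simp only [Pi.add_apply, Pi.mul_apply]; ring)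

theorem hasDerivAt_semicanonical₂ (hE : HasDerivAt E (a₂ x / 3 * E x) x)
    (ha₂ : HasDerivAt a₂ (a₂' x) x) (ha₂' : HasDerivAt a₂' (a₂'' x) x)
    (hy : HasDerivAt y (y₁ x) x) (hy₁ : HasDerivAt y₁ (y₂ x) x)
    (hy₂ : HasDerivAt y₂ (-(a₂ x * y₂ x + a₁ x * y₁ x + a₀ x * y x)) x) :
    HasDerivAt (fun s => E s * (y₂ s + 2 * a₂ s * y₁ s / 3 + (a₂' s / 3 + a₂ s ^ 2 / 9) * y s))
      (-((a₁ x - a₂' x - a₂ x ^ 2 / 3) * (E x * (y₁ x + a₂ x * y x / 3)) +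
        (a₀ x - a₁ x * a₂ x / 3 + 2 * a₂ x ^ 3 / 27 - a₂'' x / 3) * (E x * y x))) x :=
  (hE.mul ((hy₂.add (((ha₂.const_mul 2).mul hy₁).div_const 3)).add
    (((ha₂'.div_const 3).add ((ha₂.pow 2).div_const 9)).mul hy))).congr_deriv (by
      simp only [Pi.add_apply, Pi.mul_apply, Pi.pow_apply]; ring)

end Semicanonical

section LaguerreForsyth

/- Since `(f ∘ φ)' = u⁻² · (f' ∘ φ)` when `φ' = u⁻²`, the functions below are `z ∘ φ`,
`z' ∘ φ`, `z'' ∘ φ`, each lemma writing the derivative as `u⁻²` times the next one. -/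

variable {u v p p' w w₁ w₂ r : ℝ → ℝ} {x : ℝ}

theorem hasDerivAt_laguerreForsyth₀ (hu : HasDerivAt u (v x) x) (hw : HasDerivAt w (w₁ x) x)
    (hu0 : u x ≠ 0) :
    HasDerivAt (fun s => w s / u s ^ 2) ((u x ^ 2)⁻¹ * (w₁ x - 2 * v x * w x / u x)) x := by
  refine (hw.div (hu.pow 2) (pow_ne_zero 2 hu0)).congr_deriv ?_
  simp only [Pi.pow_apply]
  field_simp
  ring

theorem hasDerivAt_laguerreForsyth₁ (hu : HasDerivAt u (v x) x)
    (hv : HasDerivAt v (-(p x / 4) * u x) x) (hw : HasDerivAt w (w₁ x) x)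
    (hw₁ : HasDerivAt w₁ (w₂ x) x) (hu0 : u x ≠ 0) :
    HasDerivAt (fun s => w₁ s - 2 * v s * w s / u s)
      ((u x ^ 2)⁻¹ *
        (u x ^ 2 * w₂ x - 2 * u x * v x * w₁ x + (2 * v x ^ 2 + p x * u x ^ 2 / 2) * w x)) x := by
  refine (hw₁.sub (((hv.const_mul 2).mul hw).div hu hu0)).congr_deriv ?_
  simp only [Pi.mul_apply]
  field_simp
  ring

theorem hasDerivAt_laguerreForsyth₂ (hu : HasDerivAt u (v x) x)
    (hv : HasDerivAt v (-(p x / 4) * u x) x) (hp : HasDerivAt p (p' x) x)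
    (hw : HasDerivAt w (w₁ x) x) (hw₁ : HasDerivAt w₁ (w₂ x) x)
    (hw₂ : HasDerivAt w₂ (-(p x * w₁ x + r x * w x)) x) :
    HasDerivAt
      (fun s => u s ^ 2 * w₂ s - 2 * u s * v s * w₁ s + (2 * v s ^ 2 + p s * u s ^ 2 / 2) * w s)
      ((u x ^ 2)⁻¹ * -(u x ^ 4 * (r x - p' x / 2) * w x)) x := by
  refine ((((hu.pow 2).mul hw₂).sub (((hu.const_mul 2).mul hv).mul hw₁)).add
    ((((hv.pow 2).const_mul 2).add ((hp.mul (hu.pow 2)).div_const 2)).mul hw)).congr_deriv ?_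
  simp only [Pi.add_apply, Pi.mul_apply, Pi.pow_apply]
  field_simp
  ring

end LaguerreForsyth

theorem iteratedDeriv_three_comp_eq_laguerreForsyth {J : Set ℝ} (hJ : IsOpen J)
    {u v p p' w w₁ w₂ r φ z : ℝ → ℝ}
    (hu : ∀ x ∈ J, HasDerivAt u (v x) x) (hv : ∀ x ∈ J, HasDerivAt v (-(p x / 4) * u x) x)
    (hp : ∀ x ∈ J, HasDerivAt p (p' x) x) (hu0 : ∀ x ∈ J, u x ≠ 0)
    (hw : ∀ x ∈ J, HasDerivAt w (w₁ x) x) (hw₁ : ∀ x ∈ J, HasDerivAt w₁ (w₂ x) x)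
    (hw₂ : ∀ x ∈ J, HasDerivAt w₂ (-(p x * w₁ x + r x * w x)) x)
    (hφ : ∀ x ∈ J, HasDerivAt φ (u x ^ 2)⁻¹ x)
    (hz : ∀ x ∈ J, ∀ k < 3, DifferentiableAt ℝ (iteratedDeriv k z) (φ x))
    (hzw : ∀ x ∈ J, z (φ x) = w x / u x ^ 2) :
    ∀ x ∈ J, iteratedDeriv 3 z (φ x) = -(u x ^ 6 * (r x - p' x / 2)) * z (φ x) := by
  have hφ0 (x) (hx : x ∈ J) : (u x ^ 2)⁻¹ ≠ 0 := inv_ne_zero (pow_ne_zero 2 (hu0 x hx))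
  have h₁ := iteratedDeriv_succ_comp_eq hJ hφ hφ0 (fun x hx => hz x hx 0 (by norm_num))
    (by simpa using hzw)
    (fun x hx => hasDerivAt_laguerreForsyth₀ (hu x hx) (hw x hx) (hu0 x hx))
  have h₂ := iteratedDeriv_succ_comp_eq hJ hφ hφ0 (fun x hx => hz x hx 1 (by norm_num)) h₁
    (fun x hx => hasDerivAt_laguerreForsyth₁ (hu x hx) (hv x hx) (hw x hx) (hw₁ x hx) (hu0 x hx))
  have h₃ : ∀ x ∈ J, iteratedDeriv 3 z (φ x) = _ :=
    iteratedDeriv_succ_comp_eq hJ hφ hφ0 (fun x hx => hz x hx 2 (by norm_num)) h₂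
      (fun x hx => hasDerivAt_laguerreForsyth₂ (hu x hx) (hv x hx) (hp x hx) (hw x hx)
        (hw₁ x hx) (hw₂ x hx))
  intro x hx
  rw [h₃ x hx, hzw x hx]
  field_simp

theorem iteratedDeriv_three_comp_add_mul_eq_zero {J : Set ℝ} (hJ : IsOpen J)
    {a₂ a₂' a₂'' a₁ a₀ p' u v φ E y z : ℝ → ℝ}
    (ha₂ : ∀ x ∈ J, HasDerivAt a₂ (a₂' x) x) (ha₂' : ∀ x ∈ J, HasDerivAt a₂' (a₂'' x) x)
    (hp : ∀ x ∈ J, HasDerivAt (fun s => a₁ s - a₂' s - a₂ s ^ 2 / 3) (p' x) x)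
    (hu : ∀ x ∈ J, HasDerivAt u (v x) x)
    (hv : ∀ x ∈ J, HasDerivAt v (-((a₁ x - a₂' x - a₂ x ^ 2 / 3) / 4) * u x) x)
    (hu0 : ∀ x ∈ J, u x ≠ 0) (hφ : ∀ x ∈ J, HasDerivAt φ (u x ^ 2)⁻¹ x)
    (hE : ∀ x ∈ J, HasDerivAt E (a₂ x / 3 * E x) x)
    (hy : ∀ x ∈ J, ∀ k < 3, DifferentiableAt ℝ (iteratedDeriv k y) x)
    (hyode : ∀ x ∈ J, iteratedDeriv 3 y x + a₂ x * iteratedDeriv 2 y x +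
      a₁ x * deriv y x + a₀ x * y x = 0)
    (hz : ∀ x ∈ J, ∀ k < 3, DifferentiableAt ℝ (iteratedDeriv k z) (φ x))
    (hzy : ∀ x ∈ J, z (φ x) = deriv φ x * E x * y x) :
    ∀ x ∈ J, iteratedDeriv 3 z (φ x) + u x ^ 6 *
      (a₀ x - a₁ x * a₂ x / 3 + 2 * a₂ x ^ 3 / 27 - a₂'' x / 3 - p' x / 2) * z (φ x) = 0 := by
  have hy' (x) (hx : x ∈ J) (k) (hk : k < 3) :
      HasDerivAt (iteratedDeriv k y) (iteratedDeriv (k + 1) y x) x := by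
    rw [iteratedDeriv_succ]
    exact (hy x hx k hk).hasDerivAt
  have hy₀ (x) (hx : x ∈ J) : HasDerivAt y (deriv y x) x := by
    simpa only [iteratedDeriv_zero, zero_add, iteratedDeriv_one] using hy' x hx 0 (by norm_num)
  have hy₁ (x) (hx : x ∈ J) : HasDerivAt (deriv y) (iteratedDeriv 2 y x) x := by
    simpa only [iteratedDeriv_one] using hy' x hx 1 (by norm_num)
  have hy₂ (x) (hx : x ∈ J) : HasDerivAt (iteratedDeriv 2 y)
      (-(a₂ x * iteratedDeriv 2 y x + a₁ x * deriv y x + a₀ x * y x)) x :=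
    (hy' x hx 2 (by norm_num) : HasDerivAt _ (iteratedDeriv 3 y x) x).congr_deriv
      (by linear_combination hyode x hx)
  have hz₃ := iteratedDeriv_three_comp_eq_laguerreForsyth hJ hu hv hp hu0
    (fun x hx => hasDerivAt_semicanonical₀ (hE x hx) (hy₀ x hx))
    (fun x hx => hasDerivAt_semicanonical₁ (hE x hx) (ha₂ x hx) (hy₀ x hx) (hy₁ x hx))
    (fun x hx => hasDerivAt_semicanonical₂ (hE x hx) (ha₂ x hx) (ha₂' x hx)
      (hy₀ x hx) (hy₁ x hx) (hy₂ x hx))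
    hφ hz (fun x hx => by rw [hzy x hx, (hφ x hx).deriv]; ring)
  intro x hx
  rw [hz₃ x hx]
  ring

noncomputable def semicanonicalCoeff (a₂ a₁ : ℝ → ℝ) (x : ℝ) : ℝ :=
  a₁ x - deriv a₂ x - a₂ x ^ 2 / 3

noncomputable def laguerreInvariant (a₂ a₁ a₀ : ℝ → ℝ) (x : ℝ) : ℝ :=
  a₀ x - a₁ x * a₂ x / 3 + 2 * a₂ x ^ 3 / 27 - deriv (deriv a₂) x / 3 -
    deriv (semicanonicalCoeff a₂ a₁) x / 2

section Coefficients

variable {I : Set ℝ} {a₂ a₁ a₀ : ℝ → ℝ}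

theorem contDiffOn_semicanonicalCoeff (hI : IsOpen I) (ha₂ : ContDiffOn ℝ 2 a₂ I)
    (ha₁ : ContDiffOn ℝ 1 a₁ I) : ContDiffOn ℝ 1 (semicanonicalCoeff a₂ a₁) I :=
  (ha₁.sub (ha₂.deriv_of_isOpen hI (by norm_num))).sub
    (((ha₂.of_le (by norm_num)).pow 2).div_const 3)

theorem continuousOn_laguerreInvariant (hI : IsOpen I) (ha₂ : ContDiffOn ℝ 2 a₂ I)
    (ha₁ : ContDiffOn ℝ 1 a₁ I) (ha₀ : ContinuousOn a₀ I) :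
    ContinuousOn (laguerreInvariant a₂ a₁ a₀) I := by
  have := ((ha₂.deriv_of_isOpen hI (by norm_num) : ContDiffOn ℝ 1 (deriv a₂) I)
    ).continuousOn_deriv_of_isOpen hI le_rfl
  have := (contDiffOn_semicanonicalCoeff hI ha₂ ha₁).continuousOn_deriv_of_isOpen hI le_rfl
  have := ha₁.continuousOn
  have := ha₂.continuousOn
  unfold laguerreInvariant
  fun_prop

end Coefficients

/-- Local reduction to Laguerre–Forsyth form for `n = 3`: given
`a₂ ∈ C²`, `a₁ ∈ C¹`, `a₀ ∈ C⁰` on an open interval `I` containing `x₀`, there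
exist an open subinterval `J ∋ x₀`, a `C³` change of variable `φ` with `φ' > 0`
on `J`, and a continuous `g` on `φ(J)`, such that whenever `y` solves
`y''' + a₂ y'' + a₁ y' + a₀ y = 0` on `J` and `z` is a three-times differentiable
function on `φ(J)` with `z(φ x) = φ'(x)·exp((1/3)∫_{x₀}^{x} a₂)·y(x)` on `J`,
then `z''' + g z = 0` on `φ(J)`. -/
theorem stmt_14 (I : Set ℝ) (hI : IsOpen I) (hIc : Convex ℝ I)
    (x₀ : ℝ) (hx₀ : x₀ ∈ I)
    (a₂ a₁ a₀ : ℝ → ℝ)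
    (ha₂ : ContDiffOn ℝ 2 a₂ I) (ha₁ : ContDiffOn ℝ 1 a₁ I)
    (ha₀ : ContinuousOn a₀ I) :
    ∃ J : Set ℝ, J ⊆ I ∧ IsOpen J ∧ Convex ℝ J ∧ x₀ ∈ J ∧
      ∃ φ : ℝ → ℝ, ContDiffOn ℝ 3 φ J ∧ (∀ x ∈ J, 0 < deriv φ x) ∧
        ∃ g : ℝ → ℝ, ContinuousOn g (φ '' J) ∧
          ∀ y : ℝ → ℝ,
            (∀ x ∈ J, ∀ k < 3, DifferentiableAt ℝ (iteratedDeriv k y) x) →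
            (∀ x ∈ J, iteratedDeriv 3 y x + a₂ x * iteratedDeriv 2 y x +
              a₁ x * deriv y x + a₀ x * y x = 0) →
            ∀ z : ℝ → ℝ,
              (∀ t ∈ φ '' J, ∀ k < 3, DifferentiableAt ℝ (iteratedDeriv k z) t) →
              (∀ x ∈ J, z (φ x) =
                deriv φ x * Real.exp ((1 / 3) * ∫ t in x₀..x, a₂ t) * y x) →
              ∀ t ∈ φ '' J, iteratedDeriv 3 z t + g t * z t = 0 := by
  have hp := contDiffOn_semicanonicalCoeff hI ha₂ ha₁
  have hdiff {f : ℝ → ℝ} (hf : ContDiffOn ℝ 1 f I) (x) (hx : x ∈ I) :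
      HasDerivAt f (deriv f x) x :=
    ((hf.contDiffAt (hI.mem_nhds hx)).differentiableAt one_ne_zero).hasDerivAt
  obtain ⟨ρ, hρ, hJI, u, v, φ, ψ, hφ₃, hψ, hu0, hu, hv, hφ, hψφ⟩ :=
    exists_laguerreForsyth_chart hI hx₀ hp
  refine ⟨Metric.ball x₀ ρ, hJI, Metric.isOpen_ball, convex_ball x₀ ρ, Metric.mem_ball_self hρ,
    φ, hφ₃, fun x hx => (hφ x hx).deriv ▸ inv_pos.2 (pow_pos (hu0 x hx) 2),
    fun t => u (ψ t) ^ 6 * laguerreInvariant a₂ a₁ a₀ (ψ t), ?_, ?_⟩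
  · exact ContinuousOn.comp (g := fun x => u x ^ 6 * laguerreInvariant a₂ a₁ a₀ x)
      (ContinuousOn.mul (fun x hx => (hu x hx).continuousAt.continuousWithinAt.pow 6)
        ((continuousOn_laguerreInvariant hI ha₂ ha₁ ha₀).mono hJI)) hψ
      (hψφ.mapsTo (surjOn_image φ _))
  intro y hy hyode z hz hzy
  rintro _ ⟨x, hx, rfl⟩
  have hE (x) (hx : x ∈ Metric.ball x₀ ρ) : HasDerivAt
      (fun s => Real.exp ((1 / 3) * ∫ t in x₀..s, a₂ t))
      (a₂ x / 3 * Real.exp ((1 / 3) * ∫ t in x₀..x, a₂ t)) x :=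
    ((hasDerivAt_integral_of_continuousOn hI hIc ha₂.continuousOn hx₀ (hJI hx)).const_mul
      (1 / 3)).exp.congr_deriv (by ring)
  simpa only [hψφ hx, laguerreInvariant] using
    iteratedDeriv_three_comp_add_mul_eq_zero Metric.isOpen_ball
    (fun x hx => hdiff (ha₂.of_le one_le_two) x (hJI hx))
    (fun x hx => hdiff (ha₂.deriv_of_isOpen hI le_rfl) x (hJI hx))
    (fun x hx => hdiff hp x (hJI hx)) hu hv (fun x hx => (hu0 x hx).ne') hφ hE hy hyode
    (fun x hx => hz _ (mem_image_of_mem φ hx)) (fun x hx => by rw [hzy x hx, mul_assoc]) x hx
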